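/- Let Q be a hierarchical conjunctive query and (𝒜,V,α,ψ) a cover description for Q. Then there is a partition 𝒜_1 ⊎ … ⊎ 𝒜_n = 𝒜 such that (A) each variable y ∉ vars(α(head(V))) appears in at most one set 𝒜_i, and (B) each 𝒜_i is either a singleton set, or there is a variable x ∉ vars(α(head(V))) that appears in every atom of 𝒜_i. -/

import Mathlib

/-- A relational atom (or fact): a relation symbol with a list of arguments.
Arguments are natural numbers, serving both as variables and as data values. -/
structure Atom where
  rel : ℕ
  args : List ℕ
deriving DecidableEq

/-- Apply a substitution to an atom. -/
def mapAtom (f : ℕ → ℕ) (A : Atom) : Atom := ⟨A.rel, A.args.map f⟩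

/-- The variables of an atom. -/
def Atom.vars (A : Atom) : Finset ℕ := A.args.toFinset

/-- The variables of a finite set of atoms. -/
def varsOf (B : Finset Atom) : Finset ℕ := B.biUnion Atom.vars

/-- A conjunctive query: a head atom and a finite set of body atoms. -/
structure CQ where
  head : Atom
  body : Finset Atom
deriving DecidableEq

/-- All variables of a conjunctive query. -/
def CQ.vars (Q : CQ) : Finset ℕ := Q.head.vars ∪ varsOf Q.body

/-- A schema: a set of relation symbols together with an arity function. -/
structure Schema where
  rels : Set ℕ
  ar : ℕ → ℕ

/-- An atom (or fact) over a schema. -/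
def atomOver (σ : Schema) (A : Atom) : Prop :=
  A.rel ∈ σ.rels ∧ A.args.length = σ.ar A.rel

/-- `Q` is a (well-formed) conjunctive query over schema `σ`:
nonempty body of σ-atoms, head relation symbol not in σ, and safety. -/
def isCQ (σ : Schema) (Q : CQ) : Prop :=
  Q.body.Nonempty ∧ (∀ A ∈ Q.body, atomOver σ A) ∧
  Q.head.rel ∉ σ.rels ∧ Q.head.vars ⊆ varsOf Q.body

/-- A database is a set of facts (finiteness is imposed where needed). -/
abbrev Database := Set Atom

/-- A database over a schema. -/
def isDBOver (σ : Schema) (D : Database) : Prop := ∀ F ∈ D, atomOver σ F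

/-- The result of a conjunctive query on a database. -/
def evalCQ (Q : CQ) (D : Database) : Set Atom :=
  { F | ∃ ν : ℕ → ℕ, (∀ A ∈ Q.body, mapAtom ν A ∈ D) ∧ mapAtom ν Q.head = F }

/-- Containment of conjunctive queries. -/
def containedCQ (Q1 Q2 : CQ) : Prop :=
  ∀ D : Database, D.Finite → evalCQ Q1 D ⊆ evalCQ Q2 D

/-- Equivalence of conjunctive queries. -/
def equivCQ (Q1 Q2 : CQ) : Prop :=
  ∀ D : Database, D.Finite → evalCQ Q1 D = evalCQ Q2 D

/-- A conjunctive query is minimal if no equivalent CQ has strictly fewer body atoms. -/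
def isMinimal (Q : CQ) : Prop :=
  ∀ Q2 : CQ, equivCQ Q Q2 → Q.body.card ≤ Q2.body.card

/-- A homomorphism from `Q2` to `Q1`. -/
def isHom (h : ℕ → ℕ) (Q2 Q1 : CQ) : Prop :=
  (∀ A ∈ Q2.body, mapAtom h A ∈ Q1.body) ∧ mapAtom h Q2.head = Q1.head

/-- A body homomorphism from `Q2` to `Q1`. -/
def isBodyHom (h : ℕ → ℕ) (Q2 Q1 : CQ) : Prop :=
  ∀ A ∈ Q2.body, mapAtom h A ∈ Q1.body

/-- A set of views over σ: each view is a CQ over σ and views have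
pairwise distinct head relation symbols. -/
def isViewSet (σ : Schema) (𝒱 : Finset CQ) : Prop :=
  (∀ V ∈ 𝒱, isCQ σ V) ∧
  ∀ V ∈ 𝒱, ∀ W ∈ 𝒱, V ≠ W → V.head.rel ≠ W.head.rel

/-- The 𝒱-defined database 𝒱(D). -/
def viewDB (𝒱 : Finset CQ) (D : Database) : Database :=
  ⋃ V ∈ 𝒱, evalCQ V D

/-- `Q'` is a CQ over the schema σ_𝒱 of the head relations of the views 𝒱. -/
def overViews (𝒱 : Finset CQ) (Q' : CQ) : Prop :=
  Q'.body.Nonempty ∧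
  (∀ A ∈ Q'.body, ∃ V ∈ 𝒱, A.rel = V.head.rel ∧ A.args.length = V.head.args.length) ∧
  (∀ V ∈ 𝒱, Q'.head.rel ≠ V.head.rel) ∧
  Q'.head.vars ⊆ varsOf Q'.body

/-- `Q'` is a 𝒱-rewriting of `Q`: `Q'` is over σ_𝒱 and `Q'(𝒱(D)) = Q(D)`
for every (finite) database `D` over σ. -/
def isRewriting (σ : Schema) (𝒱 : Finset CQ) (Q Q' : CQ) : Prop :=
  overViews 𝒱 Q' ∧
  ∀ D : Database, D.Finite → isDBOver σ D →
    evalCQ Q' (viewDB 𝒱 D) = evalCQ Q D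

/-- `T` is a join tree for the atom set `B`. -/
def joinTreeProp (B : Finset Atom) (T : SimpleGraph {A : Atom // A ∈ B}) : Prop :=
  T.IsTree ∧
  ∀ (x : ℕ) (A A' : {A : Atom // A ∈ B}) (p : T.Walk A A'), p.IsPath →
    x ∈ A.1.vars → x ∈ A'.1.vars → ∀ C ∈ p.support, x ∈ C.1.vars

/-- The atom set `B` has a join tree. -/
def hasJoinTree (B : Finset Atom) : Prop :=
  ∃ T : SimpleGraph {A : Atom // A ∈ B}, joinTreeProp B T

/-- A conjunctive query is acyclic if its body has a join tree. -/
def isAcyclicCQ (Q : CQ) : Prop := hasJoinTree Q.body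

/-- A conjunctive query is free-connex acyclic. -/
def isFreeConnex (Q : CQ) : Prop :=
  isAcyclicCQ Q ∧ hasJoinTree (insert Q.head Q.body)

/-- The bridge variables of `𝒜 ⊆ body(Q)`. -/
def bvars (Q : CQ) (𝒜 : Finset Atom) : Finset ℕ :=
  varsOf 𝒜 ∩ (Q.head.vars ∪ varsOf (Q.body \ 𝒜))

/-- An application of a view `V`: a substitution that does not unify any
quantified variable of `V` with another variable of `V`. -/
def isApplication (V : CQ) (α : ℕ → ℕ) : Prop :=
  ∀ x ∈ varsOf V.body, x ∉ V.head.vars →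
    ∀ y ∈ CQ.vars V, y ≠ x → α x ≠ α y

/-- The query α(V). -/
def applyCQ (α : ℕ → ℕ) (V : CQ) : CQ :=
  ⟨mapAtom α V.head, V.body.image (mapAtom α)⟩

/-- `(𝒜, V, α, ψ)` is a cover description for `Q`. -/
def isCoverDesc (Q : CQ) (𝒜 : Finset Atom) (V : CQ) (α ψ : ℕ → ℕ) : Prop :=
  𝒜 ⊆ Q.body ∧ isApplication V α ∧
  𝒜 ⊆ V.body.image (mapAtom α) ∧
  bvars Q 𝒜 ⊆ V.head.vars.image α ∧
  isBodyHom ψ (applyCQ α V) Q ∧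
  ∀ x ∈ varsOf 𝒜, ψ x = x

/-- A cover partition for `Q` over `𝒱`: a collection of cover descriptions
whose atom sets partition `body(Q)`. -/
def isCoverPartition (Q : CQ) (𝒱 : Finset CQ) (m : ℕ)
    (𝒜 : Fin m → Finset Atom) (V : Fin m → CQ) (α ψ : Fin m → ℕ → ℕ) : Prop :=
  (∀ i, V i ∈ 𝒱 ∧ isCoverDesc Q (𝒜 i) (V i) (α i) (ψ i)) ∧
  ∀ A ∈ Q.body, ∃! i, A ∈ 𝒜 i

/-- Consistency of a cover partition: a variable of any `α_j(V_j)` lies in the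
range of another `α_i` only if it also lies in `bvars(𝒜_j)`. -/
def isConsistent (Q : CQ) (m : ℕ) (𝒜 : Fin m → Finset Atom) (V : Fin m → CQ)
    (α : Fin m → ℕ → ℕ) : Prop :=
  ∀ i j : Fin m, i ≠ j → ∀ z ∈ CQ.vars (applyCQ (α j) (V j)),
    (∃ x ∈ CQ.vars (V i), α i x = z) → z ∈ bvars Q (𝒜 j)

/-- The query `Q_𝒞` induced by a (consistent) cover partition. -/
def inducedCQ (Q : CQ) (m : ℕ) (V : Fin m → CQ) (α : Fin m → ℕ → ℕ) : CQ :=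
  ⟨Q.head, Finset.image (fun i => mapAtom (α i) (V i).head) Finset.univ⟩

/-- Quantified variable disjointness for a family of view applications. -/
def QVD (m : ℕ) (V : Fin m → CQ) (α : Fin m → ℕ → ℕ) : Prop :=
  ∀ i j : Fin m, i ≠ j → ∀ x ∈ varsOf (V i).body, x ∉ (V i).head.vars →
    ∀ y ∈ CQ.vars (V j), α i x ≠ α j y

/-- `QE` is an expansion of `Q'` with respect to the views `𝒱`. -/
def isExpansion (𝒱 : Finset CQ) (Q' QE : CQ) : Prop :=
  ∃ (m : ℕ) (A' : Fin m → Atom) (V : Fin m → CQ) (α : Fin m → ℕ → ℕ),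
    (∀ i, V i ∈ 𝒱 ∧ isApplication (V i) (α i) ∧ A' i = mapAtom (α i) (V i).head) ∧
    Q'.body = Finset.image A' Finset.univ ∧
    QVD m V α ∧
    QE.head = Q'.head ∧
    QE.body = Finset.biUnion Finset.univ (fun i => (V i).body.image (mapAtom (α i)))

/-- `atoms(x)`: the body atoms of `Q` containing the variable `x`. -/
def atomsWith (Q : CQ) (x : ℕ) : Finset Atom :=
  Q.body.filter (fun A => x ∈ A.vars)

/-- Hierarchical conjunctive queries. -/
def isHierarchical (Q : CQ) : Prop :=
  ∀ x y : ℕ, atomsWith Q x ⊆ atomsWith Q y ∨ atomsWith Q y ⊆ atomsWith Q x ∨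
    atomsWith Q x ∩ atomsWith Q y = ∅

/-- q-hierarchical conjunctive queries. -/
def isQHierarchical (Q : CQ) : Prop :=
  isHierarchical Q ∧ ∀ x y : ℕ, atomsWith Q x ⊂ atomsWith Q y →
    x ∈ Q.head.vars → y ∈ Q.head.vars

/-- `P` is a partition of `body(Q)` witnessing weak head arity at most `k`. -/
def witnessesWHA (Q : CQ) (k n : ℕ) (P : Fin n → Finset Atom) : Prop :=
  (∀ i, (P i).Nonempty) ∧ (∀ i, P i ⊆ Q.body) ∧ (∀ A ∈ Q.body, ∃! i, A ∈ P i) ∧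
  (∀ i, (varsOf (P i) ∩ Q.head.vars).card ≤ k) ∧
  (∀ i j, i ≠ j → ∀ x ∈ varsOf (P i), x ∈ varsOf (P j) → x ∈ Q.head.vars)

/-- `Q` has weak head arity at most `k`. -/
def hasWHAle (Q : CQ) (k : ℕ) : Prop := ∃ n P, witnessesWHA Q k n P

/-- The weak head arity of `Q`. -/
noncomputable def weakHeadArity (Q : CQ) : ℕ := sInf {k | hasWHAle Q k}

/-- The cover graph of `Q`: vertices are the body atoms, with an edge between
two atoms iff they share a variable not occurring in the head. -/
def coverGraph (Q : CQ) : SimpleGraph {A : Atom // A ∈ Q.body} :=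
  SimpleGraph.fromRel (fun A B => ∃ x, x ∈ A.1.vars ∧ x ∈ B.1.vars ∧ x ∉ Q.head.vars)

/-- A subset `s` of the atom set `B` is connected in the (join) tree `T`. -/
def connectedIn (B : Finset Atom) (T : SimpleGraph {A : Atom // A ∈ B}) (s : Finset Atom) : Prop :=
  (T.induce {A : {A : Atom // A ∈ B} | A.1 ∈ s}).Connected

/-- For a hierarchical CQ `Q` and a cover description `(𝒜,V,α,ψ)` for
`Q` there is a partition `𝒜_1 ⊎ … ⊎ 𝒜_n = 𝒜` such that (A) each variable outside
`vars(α(head(V)))` appears in at most one set `𝒜_i` and (B) each `𝒜_i` is a singleton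
or has a variable outside `vars(α(head(V)))` appearing in every atom of `𝒜_i`. -/
theorem statement10 (σ : Schema) (Q : CQ) (hQ : isCQ σ Q) (hH : isHierarchical Q)
    (𝒜 : Finset Atom) (V : CQ) (α ψ : ℕ → ℕ) (hcd : isCoverDesc Q 𝒜 V α ψ) :
    ∃ (n : ℕ) (P : Fin n → Finset Atom),
      (∀ i, (P i).Nonempty) ∧ (∀ i, P i ⊆ 𝒜) ∧ (∀ A ∈ 𝒜, ∃! i, A ∈ P i) ∧
      (∀ y : ℕ, y ∉ (mapAtom α V.head).vars →
        ∀ i j, y ∈ varsOf (P i) → y ∈ varsOf (P j) → i = j) ∧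
      (∀ i, (P i).card = 1 ∨
        ∃ x : ℕ, x ∉ (mapAtom α V.head).vars ∧ ∀ A ∈ P i, x ∈ A.vars) := by
  classical
  obtain ⟨hsub, -, -, hbv, -, -⟩ := hcd
  set H : Finset ℕ := (mapAtom α V.head).vars with hHdef
  have hHimg : H = V.head.vars.image α := by
    ext y; simp [hHdef, mapAtom, Atom.vars]
  -- key fact: a non-H variable of 𝒜 occurs only within 𝒜 (and not in the head)
  have key : ∀ x ∈ varsOf 𝒜, x ∉ H → atomsWith Q x ⊆ 𝒜 := by
    intro x hx hxH
    have hxb : x ∉ bvars Q 𝒜 := fun h => hxH (hHimg ▸ hbv h)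
    have hxb2 : x ∉ varsOf (Q.body \ 𝒜) := by
      intro h
      exact hxb (Finset.mem_inter.2 ⟨hx, Finset.mem_union_right _ h⟩)
    intro A hA
    simp only [atomsWith, Finset.mem_filter] at hA
    by_contra hA𝒜
    exact hxb2 (Finset.mem_biUnion.2 ⟨A, Finset.mem_sdiff.2 ⟨hA.1, hA𝒜⟩, hA.2⟩)
  -- the step relation on atoms of 𝒜: sharing a non-H variable
  let T := {A : Atom // A ∈ 𝒜}
  let s : T → T → Prop := fun A B => ∃ z, z ∉ H ∧ z ∈ A.1.vars ∧ z ∈ B.1.vars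
  have hssymm : Symmetric s := by
    rintro A B ⟨z, hz1, hz2, hz3⟩; exact ⟨z, hz1, hz3, hz2⟩
  have hrsymm : Symmetric (Relation.ReflTransGen s) :=
    by
      intro a b h
      induction h with
      | refl => exact Relation.ReflTransGen.refl
      | tail _ hbc ih => exact Relation.ReflTransGen.head (hssymm hbc) ih
  let st : Setoid T := ⟨Relation.ReflTransGen s,
    ⟨fun _ => Relation.ReflTransGen.refl, fun h => hrsymm h, fun h1 h2 => h1.trans h2⟩⟩
  haveI : DecidableRel st.r := fun _ _ => Classical.dec _
  let e : Quotient st ≃ Fin (Fintype.card (Quotient st)) := Fintype.equivFin _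
  refine ⟨Fintype.card (Quotient st),
    fun i => (𝒜.attach.filter (fun A => e (Quotient.mk st A) = i)).image Subtype.val,
    ?_, ?_, ?_, ?_, ?_⟩
  case refine_2 => intro i; intro A hA; simp only [Finset.mem_image] at hA
                   obtain ⟨B, -, rfl⟩ := hA; exact B.2
  case refine_1 =>
    intro i
    obtain ⟨q, hq⟩ := e.surjective i
    obtain ⟨A, rfl⟩ := Quotient.exists_rep q
    exact ⟨A.1, Finset.mem_image.2 ⟨A, Finset.mem_filter.2 ⟨Finset.mem_attach _ _, hq⟩, rfl⟩⟩
  case refine_3 =>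
    intro A hA
    refine ⟨e (Quotient.mk st ⟨A, hA⟩), ?_, ?_⟩
    · exact Finset.mem_image.2 ⟨⟨A, hA⟩, Finset.mem_filter.2 ⟨Finset.mem_attach _ _, rfl⟩, rfl⟩
    · intro j hj
      simp only [Finset.mem_image, Finset.mem_filter] at hj
      obtain ⟨B, ⟨-, hB2⟩, hB3⟩ := hj
      have : B = ⟨A, hA⟩ := Subtype.ext hB3
      rw [this] at hB2; exact hB2.symm
  case refine_4 =>
    intro y hy i j hyi hyj
    obtain ⟨A, hA, hyA⟩ := Finset.mem_biUnion.1 hyi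
    obtain ⟨B, hB, hyB⟩ := Finset.mem_biUnion.1 hyj
    simp only [Finset.mem_image, Finset.mem_filter] at hA hB
    obtain ⟨A', ⟨-, hA2⟩, rfl⟩ := hA
    obtain ⟨B', ⟨-, hB2⟩, rfl⟩ := hB
    have hs : s A' B' := ⟨y, hy, hyA, hyB⟩
    have : Quotient.mk st A' = Quotient.mk st B' :=
      Quotient.sound (Relation.ReflTransGen.single hs)
    rw [← hA2, ← hB2, this]
  case refine_5 =>
    intro i
    set Pi : Finset Atom :=
      (𝒜.attach.filter (fun A => e (Quotient.mk st A) = i)).image Subtype.val with hPi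
    have hPisub : Pi ⊆ 𝒜 := by
      intro A hA; simp only [hPi, Finset.mem_image] at hA
      obtain ⟨B, -, rfl⟩ := hA; exact B.2
    have hmemPi : ∀ (A : T), A.1 ∈ Pi ↔ e (Quotient.mk st A) = i := by
      intro A
      simp only [hPi, Finset.mem_image, Finset.mem_filter]
      constructor
      · rintro ⟨B, ⟨-, hB⟩, hBA⟩
        rwa [Subtype.ext hBA] at hB
      · intro h; exact ⟨A, ⟨Finset.mem_attach _ _, h⟩, rfl⟩
    by_cases hcard : Pi.card = 1
    · exact Or.inl hcard
    right
    -- Pi has at least two elements, hence an internal non-H variable exists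
    have hne : Pi.Nonempty := by
      obtain ⟨q, hq⟩ := e.surjective i
      obtain ⟨A, rfl⟩ := Quotient.exists_rep q
      exact ⟨A.1, (hmemPi A).2 hq⟩
    have h2 : 1 < Pi.card := lt_of_le_of_ne (Finset.one_le_card.2 hne) (Ne.symm hcard)
    obtain ⟨A, hA, B, hB, hAB⟩ := Finset.one_lt_card.1 h2
    have hA𝒜 := hPisub hA
    have hB𝒜 := hPisub hB
    have hreq : Quotient.mk st ⟨A, hA𝒜⟩ = Quotient.mk st ⟨B, hB𝒜⟩ := by
      apply e.injective
      rw [(hmemPi ⟨A, hA𝒜⟩).1 hA, (hmemPi ⟨B, hB𝒜⟩).1 hB]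
    have hr : Relation.ReflTransGen s ⟨A, hA𝒜⟩ ⟨B, hB𝒜⟩ := Quotient.exact hreq
    have hZne : ∃ z, z ∈ varsOf Pi ∧ z ∉ H := by
      rcases (Relation.ReflTransGen.cases_head hr) with heq | ⟨c, ⟨z, hz1, hz2, -⟩, -⟩
      · exact absurd (congrArg Subtype.val heq) hAB
      · exact ⟨z, Finset.mem_biUnion.2 ⟨A, hA, hz2⟩, hz1⟩
    -- pick a maximal non-H variable of Pi
    set Z : Finset ℕ := (varsOf Pi) \ H with hZ
    have hZne' : Z.Nonempty := by
      obtain ⟨z, hz1, hz2⟩ := hZne; exact ⟨z, Finset.mem_sdiff.2 ⟨hz1, hz2⟩⟩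
    obtain ⟨s0, hs0, hs0max⟩ := Finset.exists_maximal
      (hZne'.image (atomsWith Q))
    obtain ⟨x, hxZ, hxs0⟩ := Finset.mem_image.1 hs0
    have hxmax : ∀ z ∈ Z, ¬ atomsWith Q x ⊂ atomsWith Q z := by
      intro z hz hlt
      rw [hxs0] at hlt
      exact hlt.not_subset (hs0max (Finset.mem_image_of_mem _ hz) hlt.subset)
    obtain ⟨hxPi, hxH⟩ := Finset.mem_sdiff.1 hxZ
    -- the edge-step lemma
    have step : ∀ C D : T, C.1 ∈ Pi → s C D → x ∈ C.1.vars → x ∈ D.1.vars := by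
      rintro C D hCPi ⟨z, hzH, hzC, hzD⟩ hxC
      have hzPi : z ∈ Z := Finset.mem_sdiff.2 ⟨Finset.mem_biUnion.2 ⟨C.1, hCPi, hzC⟩, hzH⟩
      have hCQ : C.1 ∈ Q.body := hsub C.2
      have hDQ : D.1 ∈ Q.body := hsub D.2
      have hCx : C.1 ∈ atomsWith Q x := Finset.mem_filter.2 ⟨hCQ, hxC⟩
      have hCz : C.1 ∈ atomsWith Q z := Finset.mem_filter.2 ⟨hCQ, hzC⟩
      have hzx : atomsWith Q z ⊆ atomsWith Q x := by
        rcases hH x z with h | h | h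
        · by_contra hzx
          exact hxmax z hzPi (Finset.ssubset_iff_of_subset h |>.2
            (by
              rcases Finset.not_subset.1 hzx with ⟨E, hE1, hE2⟩
              exact ⟨E, hE1, hE2⟩))
        · exact h
        · exact absurd (h ▸ Finset.mem_inter.2 ⟨hCx, hCz⟩) (Finset.notMem_empty _)
      have : D.1 ∈ atomsWith Q x := hzx (Finset.mem_filter.2 ⟨hDQ, hzD⟩)
      exact (Finset.mem_filter.1 this).2
    refine ⟨x, hxH, ?_⟩
    obtain ⟨A0, hA0Pi, hxA0⟩ := Finset.mem_biUnion.1 hxPi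
    have hA0𝒜 := hPisub hA0Pi
    intro B hBPi
    have hB𝒜' := hPisub hBPi
    have hreq2 : Quotient.mk st (⟨A0, hA0𝒜⟩ : T) = Quotient.mk st ⟨B, hB𝒜'⟩ := by
      apply e.injective
      rw [(hmemPi ⟨A0, hA0𝒜⟩).1 hA0Pi, (hmemPi ⟨B, hB𝒜'⟩).1 hBPi]
    have hr2 : Relation.ReflTransGen s ⟨A0, hA0𝒜⟩ ⟨B, hB𝒜'⟩ := Quotient.exact hreq2
    have main : ∀ D : T, Relation.ReflTransGen s ⟨A0, hA0𝒜⟩ D → x ∈ D.1.vars := by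
      intro D hD
      induction hD with
      | refl => exact hxA0
      | tail hr' hs' ih =>
        rename_i c d
        have hcPi : c.1 ∈ Pi := by
          rw [hmemPi c, ← Quotient.sound hr', (hmemPi ⟨A0, hA0𝒜⟩).1 hA0Pi]
        exact step c d hcPi hs' ih
    exact main _ hr2
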